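/- Let Z and M be mutually inverse d×d matrices and f, g column vectors of length d with γ := gᵀMf ≠ 0. Define the (2d+1)×(2d+1) block matrices Z̄ = [[Z, f, Z], [gᵀ, 0, gᵀ], [0, f, Z]] and M̄ = [[M, 0, −M], [γ⁻¹gᵀM, −γ⁻¹, 0], [−γ⁻¹Mfgᵀ M, γ⁻¹Mf, M]], and vectors f̄ = (f; 0; 0), ḡ = (0; 0; g). Then Z̄ and M̄ are mutually inverse and ḡᵀM̄f̄ = −γ ≠ 0. -/

import Mathlib

/-!
Write a vector of length `2d+1` as `(x; t; y)`. Then `M̄ (x; t; y) = (M(x - y); s; My - s Mf)`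
with `s = γ⁻¹ (gᵀMx - t)`, and applying `Z̄` to this returns `(x; t; y)` using only `ZM = 1` and
`gᵀMf = γ`. So `Z̄ M̄ = 1`, and `M̄ Z̄ = 1` follows because the matrices are square over a
commutative ring. Taking `(x; t; y) = f̄` gives `s = 1`, so `M̄ f̄ = (Mf; 1; -Mf)` and `ḡᵀ M̄ f̄ = -γ`.
-/

open Matrix

section

variable {R n : Type*}

def blockVec (x : n → R) (t : R) (y : n → R) : n ⊕ Unit ⊕ n → R :=
  Sum.elim x (Sum.elim (fun _ => t) y)

lemma eq_blockVec (v : n ⊕ Unit ⊕ n → R) :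
    v = blockVec (fun a => v (.inl a)) (v (.inr (.inl ()))) (fun a => v (.inr (.inr a))) := by
  funext i
  rcases i with a | ⟨⟩ | a <;> rfl

variable [CommRing R] [Fintype n]

lemma blockVec_dotProduct_blockVec (x y x' y' : n → R) (t t' : R) :
    blockVec x t y ⬝ᵥ blockVec x' t' y' = x ⬝ᵥ x' + t * t' + y ⬝ᵥ y' := by
  simp [blockVec, dotProduct, Fintype.sum_sum_type, add_assoc]

def zBar (Z : Matrix n n R) (f g : n → R) : Matrix (n ⊕ Unit ⊕ n) (n ⊕ Unit ⊕ n) R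
  | .inl a, .inl b => Z a b
  | .inl a, .inr (.inl _) => f a
  | .inl a, .inr (.inr b) => Z a b
  | .inr (.inl _), .inl b => g b
  | .inr (.inl _), .inr (.inl _) => 0
  | .inr (.inl _), .inr (.inr b) => g b
  | .inr (.inr _), .inl _ => 0
  | .inr (.inr a), .inr (.inl _) => f a
  | .inr (.inr a), .inr (.inr b) => Z a b

/-- The paper's `M̄` is `mBar M (M *ᵥ f) (g ᵥ* M) γ⁻¹`; keeping `u = Mf`, `wᵀ = gᵀM` and `c = γ⁻¹`
abstract makes the matrix–vector product a plain ring computation. -/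
def mBar (M : Matrix n n R) (u w : n → R) (c : R) : Matrix (n ⊕ Unit ⊕ n) (n ⊕ Unit ⊕ n) R
  | .inl a, .inl b => M a b
  | .inl _, .inr (.inl _) => 0
  | .inl a, .inr (.inr b) => -M a b
  | .inr (.inl _), .inl b => c * w b
  | .inr (.inl _), .inr (.inl _) => -c
  | .inr (.inl _), .inr (.inr _) => 0
  | .inr (.inr a), .inl b => -c * u a * w b
  | .inr (.inr a), .inr (.inl _) => c * u a
  | .inr (.inr a), .inr (.inr b) => M a b

lemma zBar_mulVec_blockVec (Z : Matrix n n R) (f g p q : n → R) (s : R) :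
    zBar Z f g *ᵥ blockVec p s q =
      blockVec (Z *ᵥ (p + q) + s • f) (g ⬝ᵥ (p + q)) (s • f + Z *ᵥ q) := by
  funext i
  rcases i with a | ⟨⟩ | a <;>
    simp only [zBar, blockVec, mulVec, dotProduct, Fintype.sum_sum_type, Sum.elim_inl,
      Sum.elim_inr, Finset.univ_unique, Finset.sum_singleton, Pi.add_apply, Pi.smul_apply,
      smul_eq_mul, mul_add, Finset.sum_add_distrib, zero_mul, Finset.sum_const_zero] <;> ring

lemma mBar_mulVec_blockVec (M : Matrix n n R) (u w x y : n → R) (c t : R) :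
    mBar M u w c *ᵥ blockVec x t y =
      blockVec (M *ᵥ (x - y)) (c * (w ⬝ᵥ x - t)) (M *ᵥ y - (c * (w ⬝ᵥ x - t)) • u) := by
  funext i
  rcases i with a | ⟨⟩ | a <;>
    simp only [mBar, blockVec, mulVec, dotProduct, Fintype.sum_sum_type, Sum.elim_inl,
      Sum.elim_inr, Finset.univ_unique, Finset.sum_singleton, Pi.sub_apply, Pi.smul_apply,
      smul_eq_mul, mul_sub, Finset.sum_sub_distrib, zero_mul, Finset.sum_const_zero, neg_mul,
      Finset.sum_neg_distrib, mul_assoc, ← Finset.mul_sum] <;> ring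

lemma blockVec_dotProduct_mBar_mulVec {M : Matrix n n R} {f g : n → R} {c : R}
    (hc : c * (g ⬝ᵥ (M *ᵥ f)) = 1) :
    blockVec 0 0 g ⬝ᵥ (mBar M (M *ᵥ f) (g ᵥ* M) c *ᵥ blockVec f 0 0) = -(g ⬝ᵥ (M *ᵥ f)) := by
  simp [mBar_mulVec_blockVec, blockVec_dotProduct_blockVec, ← dotProduct_mulVec, hc]

lemma zBar_mul_mBar [DecidableEq n] {Z M : Matrix n n R} {f g : n → R} {c : R}
    (hZM : Z * M = 1) (hc : c * (g ⬝ᵥ (M *ᵥ f)) = 1) :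
    zBar Z f g * mBar M (M *ᵥ f) (g ᵥ* M) c = 1 := by
  have hZM' (v : n → R) : Z *ᵥ (M *ᵥ v) = v := by rw [mulVec_mulVec, hZM, one_mulVec]
  refine ext_iff_mulVec.2 fun v => ?_
  rw [← mulVec_mulVec, one_mulVec, eq_blockVec v, mBar_mulVec_blockVec, zBar_mulVec_blockVec,
    ← dotProduct_mulVec]
  set x := fun a => v (.inl a)
  set t := v (.inr (.inl ()))
  set y := fun a => v (.inr (.inr a))
  set s := c * (g ⬝ᵥ (M *ᵥ x) - t)
  have hsum : M *ᵥ (x - y) + (M *ᵥ y - s • M *ᵥ f) = M *ᵥ (x - s • f) := by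
    simp only [mulVec_sub, mulVec_smul]
    abel
  congr 1
  · rw [hsum, hZM', sub_add_cancel]
  · rw [hsum, mulVec_sub, dotProduct_sub, mulVec_smul, dotProduct_smul, smul_eq_mul]
    linear_combination -(g ⬝ᵥ (M *ᵥ x) - t) * hc
  · rw [← mulVec_smul, ← mulVec_sub, hZM', add_sub_cancel]

end

theorem stmt14 {K : Type*} [Field K] (d : ℕ)
    (Z M : Matrix (Fin d) (Fin d) K) (f g : Fin d → K)
    (hZM : Z * M = 1)
    (γ : K) (hγ : γ = g ⬝ᵥ (M *ᵥ f)) (hγ0 : γ ≠ 0)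
    (Zbar Mbar : Matrix (Fin d ⊕ Unit ⊕ Fin d) (Fin d ⊕ Unit ⊕ Fin d) K)
    (fbar gbar : Fin d ⊕ Unit ⊕ Fin d → K)
    (hZbar : Zbar = fun i j =>
      match i, j with
      | .inl a, .inl b => Z a b
      | .inl a, .inr (.inl _) => f a
      | .inl a, .inr (.inr b) => Z a b
      | .inr (.inl _), .inl b => g b
      | .inr (.inl _), .inr (.inl _) => 0
      | .inr (.inl _), .inr (.inr b) => g b
      | .inr (.inr _), .inl _ => 0
      | .inr (.inr a), .inr (.inl _) => f a
      | .inr (.inr a), .inr (.inr b) => Z a b)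
    (hMbar : Mbar = fun i j =>
      match i, j with
      | .inl a, .inl b => M a b
      | .inl _, .inr (.inl _) => 0
      | .inl a, .inr (.inr b) => -M a b
      | .inr (.inl _), .inl b => γ⁻¹ * (g ᵥ* M) b
      | .inr (.inl _), .inr (.inl _) => -γ⁻¹
      | .inr (.inl _), .inr (.inr _) => 0
      | .inr (.inr a), .inl b => -γ⁻¹ * (M *ᵥ f) a * (g ᵥ* M) b
      | .inr (.inr a), .inr (.inl _) => γ⁻¹ * (M *ᵥ f) a
      | .inr (.inr a), .inr (.inr b) => M a b)
    (hfbar : fbar = fun i => match i with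
      | .inl a => f a
      | .inr _ => 0)
    (hgbar : gbar = fun i => match i with
      | .inr (.inr a) => g a
      | _ => 0) :
    Zbar * Mbar = 1 ∧ Mbar * Zbar = 1 ∧
    gbar ⬝ᵥ (Mbar *ᵥ fbar) = -γ ∧ gbar ⬝ᵥ (Mbar *ᵥ fbar) ≠ 0 := by
  have hZ : Zbar = zBar Z f g := by
    subst hZbar; ext (_ | _ | _) (_ | _ | _) <;> rfl
  have hM : Mbar = mBar M (M *ᵥ f) (g ᵥ* M) γ⁻¹ := by
    subst hMbar; ext (_ | _ | _) (_ | _ | _) <;> rfl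
  have hf : fbar = blockVec f 0 0 := by
    subst hfbar; funext i; rcases i with _ | _ | _ <;> rfl
  have hg : gbar = blockVec 0 0 g := by
    subst hgbar; funext i; rcases i with _ | _ | _ <;> rfl
  have hc : γ⁻¹ * (g ⬝ᵥ (M *ᵥ f)) = 1 := hγ ▸ inv_mul_cancel₀ hγ0
  have hinv := zBar_mul_mBar hZM hc
  have hdot := blockVec_dotProduct_mBar_mulVec hc
  rw [hZ, hM, hf, hg, hdot, ← hγ]
  exact ⟨hinv, mul_eq_one_comm.1 hinv, rfl, neg_ne_zero.2 hγ0⟩
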